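/- arXiv:2104.09004 — 6 statements merged into one kernel-verified Lean document; each statement's English description precedes it below -/
import Mathlib

section
/- For every integer n ≥ 1, the IR-graph G_n(IR) of the graph G_n is isomorphic to the double star S(2n,2n). -/
open SimpleGraph

section IRDefs

variable {V : Type*}

/-- `w` is a `D`-private neighbour of `v`: `w` is dominated by `v` but by no other
vertex of `D`. -/
def IsPrivateNbr (G : SimpleGraph V) (D : Set V) (v w : V) : Prop :=
  (w = v ∨ G.Adj v w) ∧ ∀ u ∈ D, u ≠ v → ¬(w = u ∨ G.Adj u w)

/-- The set `PN(v, D)` of `D`-private neighbours of `v`. -/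
def PN (G : SimpleGraph V) (v : V) (D : Set V) : Set V := {w | IsPrivateNbr G D v w}

/-- The set `EPN(v, D) = PN(v, D) − D` of external `D`-private neighbours of `v`. -/
def EPN (G : SimpleGraph V) (v : V) (D : Set V) : Set V := PN G v D \ D

/-- A set `D` is irredundant if every vertex of `D` has a `D`-private neighbour. -/
def Irredundant (G : SimpleGraph V) (D : Set V) : Prop := ∀ v ∈ D, (PN G v D).Nonempty

/-- The upper irredundance number `IR(G)`. -/
noncomputable def IRnum (G : SimpleGraph V) : ℕ :=
  sSup {n | ∃ D : Set V, Irredundant G D ∧ D.ncard = n}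

/-- An `IR(G)`-set: an irredundant set of maximum cardinality `IR(G)`. -/
def IsIRSet (G : SimpleGraph V) (D : Set V) : Prop :=
  Irredundant G D ∧ D.ncard = IRnum G

/-- The `IR`-graph of `G`: vertices are the `IR(G)`-sets, and `D` is adjacent to `D'`
iff `D' = (D − {u}) ∪ {v}` for some `u ∈ D` and `v ∈ D' − {u}` with `uv ∈ E(G)`. -/
def IRGraph (G : SimpleGraph V) [Fintype V] :
    SimpleGraph {D : Set V // IsIRSet G D} where
  Adj D D' := ∃ a b, a ∈ D.1 ∧ b ∈ D'.1 ∧ b ≠ a ∧ G.Adj a b ∧ D'.1 = (D.1 \ {a}) ∪ {b}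
  symm := by
    constructor
    rintro ⟨D, hD⟩ ⟨D', hD'⟩ ⟨a, b, ha, hb, hba, hadj, heq⟩
    dsimp only at ha hb heq ⊢
    have hbD : b ∉ D := by
      intro hbD
      have h1 : D' = D \ {a} := by
        rw [heq]
        ext x
        simp only [Set.mem_union, Set.mem_diff, Set.mem_singleton_iff]
        constructor
        · rintro (h | rfl)
          · exact h
          · exact ⟨hbD, hba⟩
        · exact Or.inl
      have h2 : D'.ncard = D.ncard - 1 := by
        rw [h1, Set.ncard_diff_singleton_of_mem ha]
      have h3 : D.ncard = D'.ncard := by rw [hD.2, hD'.2]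
      have h4 : 0 < D.ncard := (Set.ncard_pos (Set.toFinite D)).2 ⟨a, ha⟩
      omega
    refine ⟨b, a, hb, ha, fun h => hba h.symm, hadj.symm, ?_⟩
    rw [heq]
    ext x
    simp only [Set.mem_union, Set.mem_diff, Set.mem_singleton_iff]
    constructor
    · intro hx
      by_cases hxa : x = a
      · exact Or.inr hxa
      · have hxb : x ≠ b := fun h => hbD (h ▸ hx)
        exact Or.inl ⟨Or.inl ⟨hx, hxa⟩, hxb⟩
    · rintro (⟨(⟨hx, _⟩ | rfl), hxb⟩ | rfl)
      · exact hx
      · exact absurd rfl hxb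
      · exact ha
  loopless := by
    constructor
    rintro ⟨D, hD⟩ ⟨a, b, ha, hb, hba, hadj, heq⟩
    dsimp only at ha hb heq
    have h2 : a ∈ (D \ {a}) ∪ {b} := heq ▸ ha
    rcases h2 with h | h
    · exact h.2 rfl
    · exact hba h.symm

end IRDefs

/-- The double star `S(a,b)`: adjacent centres `Sum.inl false` (with `a` leaves) and
`Sum.inl true` (with `b` leaves). -/
def doubleStar (a b : ℕ) : SimpleGraph (Bool ⊕ (Fin a ⊕ Fin b)) :=
  SimpleGraph.fromRel (fun x y =>
    (x = Sum.inl false ∧ y = Sum.inl true) ∨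
    (∃ i, x = Sum.inl false ∧ y = Sum.inr (Sum.inl i)) ∨
    (∃ j, x = Sum.inl true ∧ y = Sum.inr (Sum.inr j)))

/-- The vertices of the graph `Gₙ`. -/
inductive GVert (n : ℕ) : Type
  | u : GVert n
  | v : GVert n
  | a : Fin n → GVert n
  | b : Fin n → GVert n
  | c : Fin n → GVert n
  | d : Fin n → GVert n
  deriving DecidableEq, Fintype

/-- The graph `Gₙ`: edges `uv`, `u aᵢ` for all `i`, `v bᵢ` for all `i`,
`aᵢ bⱼ` for all `i ≠ j`, and, for each `i`, the 4-cycle `(aᵢ, cᵢ, bᵢ, dᵢ, aᵢ)`. -/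
def Gn (n : ℕ) : SimpleGraph (GVert n) :=
  SimpleGraph.fromRel (fun x y =>
    (x = .u ∧ y = .v) ∨
    (∃ i, x = .u ∧ y = .a i) ∨
    (∃ i, x = .v ∧ y = .b i) ∨
    (∃ i j, i ≠ j ∧ x = .a i ∧ y = .b j) ∨
    (∃ i, x = .a i ∧ y = .c i) ∨
    (∃ i, x = .c i ∧ y = .b i) ∨
    (∃ i, x = .b i ∧ y = .d i) ∨
    (∃ i, x = .d i ∧ y = .a i))

/-- `Sᵢ = {aᵢ, bᵢ, cᵢ, dᵢ}`. -/
def Sset (n : ℕ) (i : Fin n) : Set (GVert n) := {.a i, .b i, .c i, .d i}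

/-!
An irredundant set `I` of `Gₙ` meets each `Sᵢ` in at most two vertices. If `u, v ∈ I`, the
private neighbour of `u` is some `aᵢ`, which keeps `aᵢ, cᵢ, dᵢ` out of `I`, and symmetrically
for `v` and some `bₖ`; hence `|I| ≤ 2n`, and `IR(Gₙ) = 2n + 1`, attained by `{u} ∪ C ∪ D`.
An `IR`-set therefore contains exactly one of `u, v`, say `u` (the automorphism exchanging
`u ↔ v`, `aᵢ ↔ bᵢ` covers the other case), and meets every `Sᵢ` in two vertices. It contains no
`bᵢ` and at most one `aᵢ`, so it is `{u} ∪ C ∪ D` or this set with `cᵢ` or `dᵢ` exchanged for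
`aᵢ`. Among these `4n + 2` sets, `{u} ∪ C ∪ D` and `{v} ∪ C ∪ D` are adjacent centres, each
exchanged set is a leaf at its centre, and any other two sets differ in a pair of non-adjacent
vertices.
-/

section General

variable {V W : Type*} {G : SimpleGraph V} {H : SimpleGraph W}

def Dominates (G : SimpleGraph V) (x w : V) : Prop := w = x ∨ G.Adj x w

lemma dominates_comm {x w : V} : Dominates G x w ↔ Dominates G w x := by
  rw [Dominates, Dominates, eq_comm, G.adj_comm]

lemma not_irredundant_of_dominated {D : Set V} {x : V} (hx : x ∈ D)
    (h : ∀ w, Dominates G w x → ∃ y ∈ D, y ≠ x ∧ Dominates G w y) :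
    ¬ Irredundant G D := by
  intro hD
  obtain ⟨w, hxw, hw⟩ := hD x hx
  obtain ⟨y, hy, hyx, hwy⟩ := h w (dominates_comm.1 hxw)
  exact hw y hy hyx (dominates_comm.1 hwy)

lemma Irredundant.image {D : Set V} (hD : Irredundant G D) (f : G ↪g H) :
    Irredundant H (f '' D) := by
  rintro _ ⟨x, hx, rfl⟩
  obtain ⟨w, hxw, hw⟩ := hD x hx
  refine ⟨f w, ?_, ?_⟩
  · rcases hxw with rfl | h
    exacts [Or.inl rfl, Or.inr (f.map_adj_iff.2 h)]
  · rintro _ ⟨y, hy, rfl⟩ hyx hyw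
    refine hw y hy (fun h => hyx (h ▸ rfl)) ?_
    rcases hyw with h | h
    exacts [Or.inl (f.injective h), Or.inr (f.map_adj_iff.1 h)]

lemma IRnum_eq_of_forall_ncard_le {k : ℕ}
    (hle : ∀ D, Irredundant G D → D.ncard ≤ k)
    (hex : ∃ D, Irredundant G D ∧ D.ncard = k) :
    IRnum G = k := by
  obtain ⟨D, hD, rfl⟩ := hex
  have hbound : ∀ m ∈ {m | ∃ E, Irredundant G E ∧ E.ncard = m}, m ≤ D.ncard := by
    rintro _ ⟨E, hE, rfl⟩
    exact hle E hE
  exact le_antisymm (csSup_le ⟨_, D, hD, rfl⟩ hbound)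
    (le_csSup ⟨_, hbound⟩ ⟨D, hD, rfl⟩)

lemma sum_add_le_mul_card {ι : Type*} [Fintype ι] [DecidableEq ι] {f : ι → ℕ} {c m : ℕ}
    (hf : ∀ i, f i ≤ c) (s : Finset ι) (hs : ∑ i ∈ s, f i + m ≤ c * s.card) :
    ∑ i, f i + m ≤ c * Fintype.card ι := by
  have hcompl : ∑ i ∈ sᶜ, f i ≤ sᶜ.card * c := by
    simpa using Finset.sum_le_card_nsmul sᶜ f c fun i _ => hf i
  rw [← Finset.sum_add_sum_compl s f, ← Finset.card_add_card_compl s, mul_add]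
  nlinarith

namespace IRGraph

variable [Fintype V] {D D' : {S : Set V // IsIRSet G S}}

lemma adj_of_exchange {a b : V} (ha : a ∈ D.1) (hab : G.Adj a b)
    (h : D'.1 = (D.1 \ {a}) ∪ {b}) : (IRGraph G).Adj D D' :=
  ⟨a, b, ha, h ▸ Or.inr rfl, hab.ne', hab, h⟩

lemma not_adj_of_mem_sdiff {w w' : V} (hw : w ∈ D.1 \ D'.1) (hw' : w' ∈ D'.1 \ D.1)
    (hna : ¬ G.Adj w w') : ¬ (IRGraph G).Adj D D' := by
  rintro ⟨a, b, -, -, -, hab, heq⟩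
  rw [heq] at hw hw'
  obtain rfl : w = a := by by_contra hne; exact hw.2 (Or.inl ⟨hw.1, hne⟩)
  obtain rfl : w' = b := hw'.1.resolve_left fun h => hw'.2 h.1
  exact hna hab

end IRGraph

def doubleStarOn (α β : Type*) : SimpleGraph (Bool ⊕ (α ⊕ β)) :=
  SimpleGraph.fromRel (fun x y =>
    (x = Sum.inl false ∧ y = Sum.inl true) ∨
    (∃ i, x = Sum.inl false ∧ y = Sum.inr (Sum.inl i)) ∨
    (∃ j, x = Sum.inl true ∧ y = Sum.inr (Sum.inr j)))

lemma doubleStar_eq_doubleStarOn (a b : ℕ) : doubleStar a b = doubleStarOn (Fin a) (Fin b) := rfl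

def doubleStarOn.congr {α β α' β' : Type*} (e : α ≃ α') (f : β ≃ β') :
    doubleStarOn α β ≃g doubleStarOn α' β' where
  toEquiv := Equiv.sumCongr (Equiv.refl Bool) (Equiv.sumCongr e f)
  map_rel_iff' := by
    rintro ((_ | _) | (_ | _)) ((_ | _) | (_ | _)) <;> simp [doubleStarOn]

end General

namespace GVert

variable {n : ℕ}

def swap : GVert n → GVert n
  | u => v
  | v => u
  | a i => b i
  | b i => a i
  | c i => c i
  | d i => d i

@[simp] lemma swap_u : swap (u : GVert n) = v := rfl
@[simp] lemma swap_v : swap (v : GVert n) = u := rfl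
@[simp] lemma swap_a (i : Fin n) : swap (a i) = b i := rfl
@[simp] lemma swap_b (i : Fin n) : swap (b i) = a i := rfl
@[simp] lemma swap_c (i : Fin n) : swap (c i) = c i := rfl
@[simp] lemma swap_d (i : Fin n) : swap (d i) = d i := rfl

@[simp] lemma swap_swap (x : GVert n) : swap (swap x) = x := by cases x <;> rfl

def mid (t : Bool) (i : Fin n) : GVert n := if t then c i else d i

@[simp] lemma mid_true (i : Fin n) : mid true i = c i := rfl

@[simp] lemma mid_false (i : Fin n) : mid false i = d i := rfl

@[simp] lemma mid_ne_v (t : Bool) (i : Fin n) : mid t i ≠ v := by cases t <;> simp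

@[simp] lemma mid_ne_a (t : Bool) (i j : Fin n) : mid t i ≠ a j := by cases t <;> simp

@[simp] lemma mid_ne_b (t : Bool) (i j : Fin n) : mid t i ≠ b j := by cases t <;> simp

@[simp] lemma mid_inj {s t : Bool} {i j : Fin n} : mid s i = mid t j ↔ s = t ∧ i = j := by
  cases s <;> cases t <;> simp

@[simp] lemma swap_mid (t : Bool) (i : Fin n) : swap (mid t i) = mid t i := by cases t <;> rfl

@[simp] lemma u_ne_mid (t : Bool) (i : Fin n) : u ≠ mid t i := by cases t <;> simp

@[simp] lemma a_ne_mid (t : Bool) (i j : Fin n) : a j ≠ mid t i := (mid_ne_a t i j).symm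

@[simp] lemma b_ne_mid (t : Bool) (i j : Fin n) : b j ≠ mid t i := (mid_ne_b t i j).symm

end GVert

open GVert

namespace Gn

variable {n : ℕ}

lemma adj_mid_a (t : Bool) (i : Fin n) : (Gn n).Adj (mid t i) (a i) := by
  cases t <;> simp [Gn, fromRel_adj]

lemma adj_mid_b (t : Bool) (i : Fin n) : (Gn n).Adj (mid t i) (b i) := by
  cases t <;> simp [Gn, fromRel_adj]

lemma adj_u_v : (Gn n).Adj u v := by simp [Gn, fromRel_adj]

lemma adj_u_a (i : Fin n) : (Gn n).Adj u (a i) := by simp [Gn, fromRel_adj]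

lemma adj_v_b (i : Fin n) : (Gn n).Adj v (b i) := by simp [Gn, fromRel_adj]

lemma adj_a_b {i j : Fin n} (hij : i ≠ j) : (Gn n).Adj (a i) (b j) := by
  simp [Gn, fromRel_adj, hij]

lemma not_adj_u_b (i : Fin n) : ¬ (Gn n).Adj u (b i) := by simp [Gn, fromRel_adj]

lemma not_adj_v_a (i : Fin n) : ¬ (Gn n).Adj v (a i) := by simp [Gn, fromRel_adj]

lemma not_adj_a_a (i j : Fin n) : ¬ (Gn n).Adj (a i) (a j) := by simp [Gn, fromRel_adj]

lemma not_adj_b_b (i j : Fin n) : ¬ (Gn n).Adj (b i) (b j) := by simp [Gn, fromRel_adj]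

lemma not_adj_mid_mid (s t : Bool) (i j : Fin n) : ¬ (Gn n).Adj (mid s i) (mid t j) := by
  cases s <;> cases t <;> simp [Gn, fromRel_adj]

lemma dominates_u {x : GVert n} : Dominates (Gn n) x u ↔ x = u ∨ x = v ∨ ∃ i, x = a i := by
  cases x <;> simp [Dominates, Gn, fromRel_adj]

lemma dominates_v {x : GVert n} : Dominates (Gn n) x v ↔ x = v ∨ x = u ∨ ∃ i, x = b i := by
  cases x <;> simp [Dominates, Gn, fromRel_adj]

lemma dominates_b {x : GVert n} {i : Fin n} :
    Dominates (Gn n) x (b i) ↔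
      x = b i ∨ x = v ∨ x = c i ∨ x = d i ∨ ∃ j, j ≠ i ∧ x = a j := by
  cases x <;> simp [Dominates, Gn, fromRel_adj] <;> aesop

lemma dominates_mid {x : GVert n} {t : Bool} {i : Fin n} :
    Dominates (Gn n) x (mid t i) ↔ x = mid t i ∨ x = a i ∨ x = b i := by
  cases t <;> cases x <;> simp [Dominates, Gn, fromRel_adj, mid] <;> aesop

def swapIso : Gn n ≃g Gn n where
  toFun := swap
  invFun := swap
  left_inv := swap_swap
  right_inv := swap_swap
  map_rel_iff' := by
    intro x y
    cases x <;> cases y <;> simp [Gn, fromRel_adj, swap, eq_comm]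

lemma irredundant_swap_preimage {D : Set (GVert n)} (hD : Irredundant (Gn n) D) :
    Irredundant (Gn n) (swap ⁻¹' D) := by
  rw [← Set.image_eq_preimage_of_inverse swap_swap swap_swap]
  exact hD.image swapIso.toEmbedding

def uSet : Set (GVert n) := insert u (Set.range c ∪ Set.range d)

def uLeafSet (i : Fin n) (t : Bool) : Set (GVert n) := insert (a i) (uSet \ {mid t i})

@[simp] lemma mem_uSet {x : GVert n} :
    x ∈ uSet ↔ x ≠ v ∧ ∀ i, x ≠ a i ∧ x ≠ b i := by
  cases x <;> simp [uSet]

lemma mid_mem_uSet (t : Bool) (i : Fin n) : mid t i ∈ (uSet : Set (GVert n)) := by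
  cases t <;> simp [mid]

@[simp] lemma mem_uLeafSet {x : GVert n} {i : Fin n} {t : Bool} :
    x ∈ uLeafSet i t ↔ x = a i ∨ x ∈ uSet ∧ x ≠ mid t i := by
  simp only [uLeafSet, Set.mem_insert_iff, Set.mem_sdiff, Set.mem_singleton_iff]

lemma ncard_uSet : (uSet : Set (GVert n)).ncard = 2 * n + 1 := by
  have hdisj : Disjoint (Set.range (c : Fin n → GVert n)) (Set.range d) := by
    simp [Set.disjoint_left]
  rw [uSet, Set.ncard_insert_of_notMem (by simp), Set.ncard_union_eq hdisj,
    Set.ncard_range_of_injective (fun _ _ h => by simpa using h),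
    Set.ncard_range_of_injective (fun _ _ h => by simpa using h), Nat.card_eq_fintype_card,
    Fintype.card_fin]
  ring

lemma ncard_uLeafSet (i : Fin n) (t : Bool) : (uLeafSet i t).ncard = 2 * n + 1 := by
  rw [uLeafSet, Set.ncard_insert_of_notMem (by simp),
    Set.ncard_sdiff_singleton_of_mem (mid_mem_uSet t i), ncard_uSet]
  omega

lemma eq_u_or_exists_eq_mid_of_mem_uSet {x : GVert n} (hx : x ∈ uSet) :
    x = u ∨ ∃ s j, x = mid s j := by
  cases x with
  | u => exact Or.inl rfl
  | c j => exact Or.inr ⟨true, j, rfl⟩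
  | d j => exact Or.inr ⟨false, j, rfl⟩
  | _ => simp at hx

lemma irredundant_uSet : Irredundant (Gn n) uSet := by
  intro x hx
  rcases eq_u_or_exists_eq_mid_of_mem_uSet hx with rfl | ⟨s, j, rfl⟩
  · refine ⟨v, Or.inr adj_u_v, fun y hy hne hdom => ?_⟩
    rcases dominates_v.1 hdom with rfl | rfl | ⟨j, rfl⟩ <;> simp_all
  · refine ⟨mid s j, Or.inl rfl, fun y hy hne hdom => ?_⟩
    rcases dominates_mid.1 hdom with rfl | rfl | rfl <;> simp_all

lemma irredundant_uLeafSet (i : Fin n) (t : Bool) : Irredundant (Gn n) (uLeafSet i t) := by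
  intro x hx
  rcases mem_uLeafSet.1 hx with rfl | ⟨hxu, hxt⟩
  · refine ⟨mid t i, Or.inr (adj_mid_a t i).symm, fun y hy hne hdom => ?_⟩
    rcases dominates_mid.1 hdom with rfl | rfl | rfl <;> simp_all
  rcases eq_u_or_exists_eq_mid_of_mem_uSet hxu with rfl | ⟨s, j, rfl⟩
  · refine ⟨v, Or.inr adj_u_v, fun y hy hne hdom => ?_⟩
    rcases dominates_v.1 hdom with rfl | rfl | ⟨j, rfl⟩ <;> simp_all
  by_cases hji : j = i
  · subst hji
    refine ⟨b j, Or.inr (adj_mid_b s j), fun y hy hne hdom => ?_⟩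
    rcases dominates_b.1 hdom with rfl | rfl | rfl | rfl | ⟨k, hk, rfl⟩ <;>
      cases s <;> cases t <;> simp_all
  · refine ⟨mid s j, Or.inl rfl, fun y hy hne hdom => ?_⟩
    rcases dominates_mid.1 hdom with rfl | rfl | rfl <;> simp_all

lemma not_irredundant_of_a_b_mid {D : Set (GVert n)} {i : Fin n} {t : Bool}
    (ha : a i ∈ D) (hb : b i ∈ D) (hm : mid t i ∈ D) : ¬ Irredundant (Gn n) D := by
  refine not_irredundant_of_dominated hm fun w hw => ?_
  rcases dominates_mid.1 hw with rfl | rfl | rfl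
  exacts [⟨a i, ha, by simp, Or.inr (adj_mid_a t i)⟩, ⟨a i, ha, by simp, Or.inl rfl⟩,
    ⟨b i, hb, by simp, Or.inl rfl⟩]

lemma not_irredundant_of_c_d_a {D : Set (GVert n)} {i : Fin n}
    (hc : c i ∈ D) (hd : d i ∈ D) (ha : a i ∈ D) : ¬ Irredundant (Gn n) D := by
  refine not_irredundant_of_dominated (x := mid true i) hc fun w hw => ?_
  rcases dominates_mid.1 hw with rfl | rfl | rfl
  exacts [⟨a i, ha, by simp, Or.inr (adj_mid_a true i)⟩, ⟨a i, ha, by simp, Or.inl rfl⟩,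
    ⟨d i, hd, by simp, Or.inr (adj_mid_b false i).symm⟩]

lemma not_irredundant_of_c_d_b {D : Set (GVert n)} {i : Fin n}
    (hc : c i ∈ D) (hd : d i ∈ D) (hb : b i ∈ D) : ¬ Irredundant (Gn n) D := by
  refine not_irredundant_of_dominated (x := mid true i) hc fun w hw => ?_
  rcases dominates_mid.1 hw with rfl | rfl | rfl
  exacts [⟨b i, hb, by simp, Or.inr (adj_mid_b true i)⟩,
    ⟨d i, hd, by simp, Or.inr (adj_mid_a false i).symm⟩, ⟨b i, hb, by simp, Or.inl rfl⟩]

lemma not_irredundant_of_u_b_mid {D : Set (GVert n)} {i : Fin n} {t : Bool}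
    (hu : u ∈ D) (hb : b i ∈ D) (hm : mid t i ∈ D) : ¬ Irredundant (Gn n) D := by
  refine not_irredundant_of_dominated hm fun w hw => ?_
  rcases dominates_mid.1 hw with rfl | rfl | rfl
  exacts [⟨b i, hb, by simp, Or.inr (adj_mid_b t i)⟩,
    ⟨u, hu, by simp, Or.inr (adj_u_a i).symm⟩, ⟨b i, hb, by simp, Or.inl rfl⟩]

lemma not_irredundant_of_u_a_mid_a {D : Set (GVert n)} {i j : Fin n} {t : Bool}
    (hu : u ∈ D) (ha : a i ∈ D) (hm : mid t i ∈ D) (hji : j ≠ i) (haj : a j ∈ D) :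
    ¬ Irredundant (Gn n) D := by
  refine not_irredundant_of_dominated hm fun w hw => ?_
  rcases dominates_mid.1 hw with rfl | rfl | rfl
  exacts [⟨a i, ha, by simp, Or.inr (adj_mid_a t i)⟩,
    ⟨u, hu, by simp, Or.inr (adj_u_a i).symm⟩,
    ⟨a j, haj, by simp, Or.inr (adj_a_b hji).symm⟩]

lemma not_irredundant_of_u_a_b {D : Set (GVert n)} {i j : Fin n} (hu : u ∈ D)
    (ha : a i ∈ D) (hb : b j ∈ D) (hS : ∀ k, a k ∈ D ∨ c k ∈ D ∨ d k ∈ D) :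
    ¬ Irredundant (Gn n) D := by
  refine not_irredundant_of_dominated hu fun w hw => ?_
  rcases dominates_u.1 hw with rfl | rfl | ⟨k, rfl⟩
  · exact ⟨a i, ha, by simp, Or.inr (adj_u_a i)⟩
  · exact ⟨b j, hb, by simp, Or.inr (adj_v_b j)⟩
  · rcases hS k with h | h | h
    exacts [⟨a k, h, by simp, Or.inl rfl⟩,
      ⟨c k, h, by simp, Or.inr (adj_mid_a true k).symm⟩,
      ⟨d k, h, by simp, Or.inr (adj_mid_a false k).symm⟩]

lemma exists_a_c_d_not_mem_of_u_v {D : Set (GVert n)} (hD : Irredundant (Gn n) D)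
    (hu : u ∈ D) (hv : v ∈ D) : ∃ i, a i ∉ D ∧ c i ∉ D ∧ d i ∉ D := by
  obtain ⟨w, huw, hw⟩ := hD u hu
  rcases dominates_u.1 (dominates_comm.1 huw) with rfl | rfl | ⟨i, rfl⟩
  · exact absurd (Or.inr adj_u_v.symm) (hw v hv (by simp))
  · exact absurd (Or.inl rfl) (hw v hv (by simp))
  · refine ⟨i, fun h => hw _ h (by simp) (Or.inl rfl), fun h => hw _ h (by simp) ?_,
      fun h => hw _ h (by simp) ?_⟩
    exacts [Or.inr (adj_mid_a true i), Or.inr (adj_mid_a false i)]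

def block : GVert n → Option (Fin n)
  | u | v => none
  | a i | b i | c i | d i => some i

open Classical in
lemma ncard_eq_sum (D : Set (GVert n)) :
    D.ncard = (D ∩ {u, v}).ncard + ∑ i, (D ∩ Sset n i).ncard := by
  have hfib (o : Option (Fin n)) :
      (D ∩ block ⁻¹' {o}).ncard = (D.toFinset.filter (block · = o)).card := by
    rw [← Set.ncard_coe_finset]; congr 1; ext x; simp
  have hnone : block ⁻¹' {none} = ({u, v} : Set (GVert n)) := by
    ext x; cases x <;> simp [block]
  have hsome (i : Fin n) : block ⁻¹' {some i} = Sset n i := by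
    ext x; cases x <;> simp [block, Sset, eq_comm]
  rw [Set.ncard_eq_toFinset_card', Finset.card_eq_sum_card_fiberwise (f := block)
    (t := Finset.univ) (fun x _ => Finset.mem_univ _), Fintype.sum_option, ← hnone, hfib]
  simp only [← hsome, hfib]

open Classical in
lemma ncard_inter_uv (D : Set (GVert n)) :
    (D ∩ {u, v}).ncard = (if u ∈ D then 1 else 0) + (if v ∈ D then 1 else 0) := by
  have : D ∩ {u, v} = ({u, v} : Finset (GVert n)).filter (· ∈ D) := by
    ext x; simp [and_comm]
  rw [this, Set.ncard_coe_finset, Finset.card_filter, Finset.sum_insert (by simp),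
    Finset.sum_singleton]

open Classical in
lemma ncard_inter_Sset (D : Set (GVert n)) (i : Fin n) :
    (D ∩ Sset n i).ncard = (if a i ∈ D then 1 else 0) + (if b i ∈ D then 1 else 0) +
      (if c i ∈ D then 1 else 0) + (if d i ∈ D then 1 else 0) := by
  have : D ∩ Sset n i = ({a i, b i, c i, d i} : Finset (GVert n)).filter (· ∈ D) := by
    ext x; simp [Sset, and_comm]
  rw [this, Set.ncard_coe_finset, Finset.card_filter, Finset.sum_insert (by simp),
    Finset.sum_insert (by simp), Finset.sum_insert (by simp), Finset.sum_singleton]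
  ring

variable {D : Set (GVert n)}

lemma ncard_inter_Sset_le_two (hD : Irredundant (Gn n) D) (i : Fin n) :
    (D ∩ Sset n i).ncard ≤ 2 := by
  have habc := not_irredundant_of_a_b_mid (D := D) (i := i) (t := true)
  have habd := not_irredundant_of_a_b_mid (D := D) (i := i) (t := false)
  have hcda := not_irredundant_of_c_d_a (D := D) (i := i)
  have hcdb := not_irredundant_of_c_d_b (D := D) (i := i)
  simp only [mid_true, mid_false] at habc habd
  rw [ncard_inter_Sset]
  split_ifs <;> simp_all

lemma sum_ncard_inter_Sset_le (hD : Irredundant (Gn n) D) :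
    ∑ i, (D ∩ Sset n i).ncard ≤ 2 * n := by
  simpa [mul_comm] using
    Finset.sum_le_card_nsmul Finset.univ _ 2 fun i _ => ncard_inter_Sset_le_two hD i

lemma ncard_le_of_u_mem_of_v_mem (hD : Irredundant (Gn n) D) (hu : u ∈ D) (hv : v ∈ D) :
    D.ncard ≤ 2 * n := by
  obtain ⟨i, hai, hci, hdi⟩ := exists_a_c_d_not_mem_of_u_v hD hu hv
  obtain ⟨k, hbk, hck, hdk⟩ := exists_a_c_d_not_mem_of_u_v (irredundant_swap_preimage hD)
    (by simpa using hv) (by simpa using hu)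
  simp only [Set.mem_preimage, swap_a, swap_c, swap_d] at hbk hck hdk
  have hblock_i : (D ∩ Sset n i).ncard ≤ 1 := by
    rw [ncard_inter_Sset]; split_ifs <;> simp_all
  have hblock_k : (D ∩ Sset n k).ncard ≤ 1 := by
    rw [ncard_inter_Sset]; split_ifs <;> simp_all
  have hsum : ∑ j, (D ∩ Sset n j).ncard + 2 ≤ 2 * n := by
    simpa using sum_add_le_mul_card (ncard_inter_Sset_le_two hD) {i, k} (by
      by_cases hik : i = k
      · subst hik
        have : (D ∩ Sset n i).ncard = 0 := by rw [ncard_inter_Sset]; simp [*]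
        simp [this]
      · rw [Finset.sum_pair hik, Finset.card_pair hik]
        omega)
  rw [ncard_eq_sum, ncard_inter_uv]
  simp only [hu, hv, if_true]
  omega

lemma ncard_le (hD : Irredundant (Gn n) D) : D.ncard ≤ 2 * n + 1 := by
  by_cases huv : u ∈ D ∧ v ∈ D
  · exact (ncard_le_of_u_mem_of_v_mem hD huv.1 huv.2).trans (Nat.le_succ _)
  have hsum := sum_ncard_inter_Sset_le hD
  rw [ncard_eq_sum, ncard_inter_uv]
  split_ifs <;> simp_all <;> omega

lemma IRnum_eq : IRnum (Gn n) = 2 * n + 1 :=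
  IRnum_eq_of_forall_ncard_le (fun _ => ncard_le) ⟨uSet, irredundant_uSet, ncard_uSet⟩


lemma v_not_mem_of_ncard_eq (hD : Irredundant (Gn n) D) (hcard : D.ncard = 2 * n + 1)
    (hu : u ∈ D) : v ∉ D := fun hv => by
  have := ncard_le_of_u_mem_of_v_mem hD hu hv
  omega

lemma ncard_inter_Sset_eq_two (hD : Irredundant (Gn n) D) (hcard : D.ncard = 2 * n + 1)
    (hu : u ∈ D) (i : Fin n) : (D ∩ Sset n i).ncard = 2 := by
  by_contra hi
  have hsum : ∑ j, (D ∩ Sset n j).ncard + 1 ≤ 2 * n := by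
    simpa using sum_add_le_mul_card (m := 1) (ncard_inter_Sset_le_two hD) {i} (by
      have := ncard_inter_Sset_le_two hD i
      simp only [Finset.sum_singleton, Finset.card_singleton]
      omega)
  have hv := v_not_mem_of_ncard_eq hD hcard hu
  rw [ncard_eq_sum, ncard_inter_uv] at hcard
  simp only [hu, hv, if_true, if_false] at hcard
  omega

lemma b_not_mem_of_ncard_eq (hD : Irredundant (Gn n) D) (hcard : D.ncard = 2 * n + 1)
    (hu : u ∈ D) (i : Fin n) : b i ∉ D := by
  have hS (k : Fin n) : a k ∈ D ∨ c k ∈ D ∨ d k ∈ D := by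
    have := ncard_inter_Sset_eq_two hD hcard hu k
    rw [ncard_inter_Sset] at this
    by_contra! h
    simp only [h, if_false] at this
    split_ifs at this <;> omega
  intro hb
  rcases hS i with ha | hc | hd
  · exact not_irredundant_of_u_a_b hu ha hb hS hD
  · exact not_irredundant_of_u_b_mid (t := true) hu hb hc hD
  · exact not_irredundant_of_u_b_mid (t := false) hu hb hd hD

lemma eq_uSet_or_eq_uLeafSet (hD : Irredundant (Gn n) D) (hcard : D.ncard = 2 * n + 1)
    (hu : u ∈ D) : D = uSet ∨ ∃ i t, D = uLeafSet i t := by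
  have hv := v_not_mem_of_ncard_eq hD hcard hu
  have hb := b_not_mem_of_ncard_eq hD hcard hu
  by_cases hA : ∃ i, a i ∈ D
  · obtain ⟨i, ha⟩ := hA
    obtain ⟨s, hs⟩ : ∃ s, mid s i ∈ D := by
      have := ncard_inter_Sset_eq_two hD hcard hu i
      rw [ncard_inter_Sset] at this
      by_contra! h
      have hc := h true
      have hd := h false
      simp only [mid_true, mid_false] at hc hd
      simp only [ha, hb i, hc, hd, if_true, if_false] at this
      omega
    obtain ⟨t, ht⟩ : ∃ t, mid t i ∉ D := by
      by_contra! h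
      exact not_irredundant_of_c_d_a (h true) (h false) ha hD
    have hA (j : Fin n) (hj : a j ∈ D) : j = i := by
      by_contra hji
      exact not_irredundant_of_u_a_mid_a hu ha hs hji hj hD
    refine Or.inr ⟨i, t, Set.eq_of_subset_of_ncard_le (fun x hx => ?_)
      (by rw [hcard, ncard_uLeafSet])⟩
    by_cases hxa : x = a i
    · exact Or.inl hxa
    refine Or.inr ⟨mem_uSet.2 ⟨ne_of_mem_of_not_mem hx hv, fun j => ⟨?_,
      ne_of_mem_of_not_mem hx (hb j)⟩⟩, ne_of_mem_of_not_mem hx ht⟩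
    rintro rfl
    exact hxa (by rw [hA j hx])
  · simp only [not_exists] at hA
    refine Or.inl (Set.eq_of_subset_of_ncard_le (fun x hx => ?_) (by rw [hcard, ncard_uSet]))
    exact mem_uSet.2 ⟨ne_of_mem_of_not_mem hx hv,
      fun j => ⟨ne_of_mem_of_not_mem hx (hA j), ne_of_mem_of_not_mem hx (hb j)⟩⟩

lemma u_mem_or_v_mem_of_ncard_eq (hD : Irredundant (Gn n) D) (hcard : D.ncard = 2 * n + 1) :
    u ∈ D ∨ v ∈ D := by
  by_contra! h
  have hsum := sum_ncard_inter_Sset_le hD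
  rw [ncard_eq_sum, ncard_inter_uv] at hcard
  simp only [h, if_false] at hcard
  omega

lemma ncard_swap_preimage (S : Set (GVert n)) : (swap ⁻¹' S).ncard = S.ncard := by
  rw [← Set.image_eq_preimage_of_inverse swap_swap swap_swap,
    Set.ncard_image_of_injective _ (Function.LeftInverse.injective swap_swap)]

lemma swap_preimage_swap_preimage (S : Set (GVert n)) : swap ⁻¹' (swap ⁻¹' S) = S := by
  ext x; simp

lemma isIRSet_iff : IsIRSet (Gn n) D ↔ Irredundant (Gn n) D ∧ D.ncard = 2 * n + 1 := by
  rw [IsIRSet, IRnum_eq]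

abbrev IRIndex (n : ℕ) : Type := Bool ⊕ ((Fin n × Bool) ⊕ (Fin n × Bool))

def irSet : IRIndex n → Set (GVert n)
  | .inl false => uSet
  | .inl true => swap ⁻¹' uSet
  | .inr (.inl (i, t)) => uLeafSet i t
  | .inr (.inr (i, t)) => swap ⁻¹' uLeafSet i t

lemma isIRSet_irSet (p : IRIndex n) : IsIRSet (Gn n) (irSet p) := by
  rw [isIRSet_iff]
  rcases p with (_ | _) | (⟨i, t⟩ | ⟨i, t⟩)
  · exact ⟨irredundant_uSet, ncard_uSet⟩
  · exact ⟨irredundant_swap_preimage irredundant_uSet,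
      by rw [irSet, ncard_swap_preimage, ncard_uSet]⟩
  · exact ⟨irredundant_uLeafSet i t, ncard_uLeafSet i t⟩
  · exact ⟨irredundant_swap_preimage (irredundant_uLeafSet i t),
      by rw [irSet, ncard_swap_preimage, ncard_uLeafSet]⟩

lemma exists_irSet_eq (hD : IsIRSet (Gn n) D) : ∃ p, irSet p = D := by
  obtain ⟨hD, hcard⟩ := isIRSet_iff.1 hD
  rcases u_mem_or_v_mem_of_ncard_eq hD hcard with hu | hv
  · rcases eq_uSet_or_eq_uLeafSet hD hcard hu with rfl | ⟨i, t, rfl⟩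
    exacts [⟨.inl false, rfl⟩, ⟨.inr (.inl (i, t)), rfl⟩]
  · rcases eq_uSet_or_eq_uLeafSet (irredundant_swap_preimage hD)
      (by rw [ncard_swap_preimage, hcard]) (by simpa using hv) with h | ⟨i, t, h⟩
    · exact ⟨.inl true, by rw [irSet, ← h, swap_preimage_swap_preimage]⟩
    · exact ⟨.inr (.inr (i, t)), by rw [irSet, ← h, swap_preimage_swap_preimage]⟩

lemma uLeafSet_ne_uSet (i : Fin n) (t : Bool) : uLeafSet i t ≠ uSet := fun h => by
  have ha : a i ∈ uLeafSet i t := by simp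
  simp [h] at ha

lemma uLeafSet_inj {i j : Fin n} {s t : Bool} (h : uLeafSet i s = uLeafSet j t) :
    i = j ∧ s = t := by
  have ha : a i ∈ uLeafSet i s := by simp
  have hm : mid s i ∉ uLeafSet i s := by simp
  rw [h] at ha hm
  obtain rfl : i = j := by simpa [eq_comm] using ha
  cases s <;> cases t <;> simp_all

lemma irSet_injective : Function.Injective (irSet : _ → Set (GVert n)) := by
  have hswap : Function.Injective (Set.preimage (swap : GVert n → GVert n)) :=
    Set.preimage_injective.2 (Function.RightInverse.surjective swap_swap)
  intro p q h
  have hmem (x : GVert n) : x ∈ irSet p ↔ x ∈ irSet q := by rw [h]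
  rcases p with (_ | _) | (⟨i, s⟩ | ⟨i, s⟩) <;>
    rcases q with (_ | _) | (⟨j, r⟩ | ⟨j, r⟩) <;>
    first
      | rfl
      | (have hu := hmem u; simp [irSet] at hu; done)
      | skip
  · exact absurd h.symm (uLeafSet_ne_uSet j r)
  · exact absurd (hswap h).symm (uLeafSet_ne_uSet j r)
  · exact absurd h (uLeafSet_ne_uSet i s)
  · obtain ⟨rfl, rfl⟩ := uLeafSet_inj h; rfl
  · exact absurd (hswap h) (uLeafSet_ne_uSet i s)
  · obtain ⟨rfl, rfl⟩ := uLeafSet_inj (hswap h); rfl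

lemma swap_preimage_uSet : swap ⁻¹' uSet = (uSet \ {u}) ∪ {(v : GVert n)} := by
  ext x; cases x <;> simp

lemma uLeafSet_eq_exchange (i : Fin n) (t : Bool) :
    uLeafSet i t = (uSet \ {mid t i}) ∪ {a i} := by
  rw [Set.union_singleton, uLeafSet]

lemma swap_preimage_uLeafSet_eq_exchange (i : Fin n) (t : Bool) :
    swap ⁻¹' uLeafSet i t = (swap ⁻¹' uSet \ {mid t i}) ∪ {b i} := by
  ext x; cases x <;> cases t <;> simp [eq_comm]

def irSetVertex (p : IRIndex n) :
    {D : Set (GVert n) // IsIRSet (Gn n) D} :=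
  ⟨irSet p, isIRSet_irSet p⟩

@[simp] lemma irSetVertex_val (p : IRIndex n) :
    (irSetVertex p).1 = irSet p := rfl

lemma adj_irSetVertex_centres :
    (IRGraph (Gn n)).Adj (irSetVertex (.inl false)) (irSetVertex (.inl true)) :=
  IRGraph.adj_of_exchange (a := u) (by simp [irSetVertex, irSet]) adj_u_v swap_preimage_uSet

lemma adj_irSetVertex_left_leaf (i : Fin n) (t : Bool) :
    (IRGraph (Gn n)).Adj (irSetVertex (.inl false)) (irSetVertex (.inr (.inl (i, t)))) :=
  IRGraph.adj_of_exchange (mid_mem_uSet t i) (adj_mid_a t i) (uLeafSet_eq_exchange i t)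

lemma adj_irSetVertex_right_leaf (i : Fin n) (t : Bool) :
    (IRGraph (Gn n)).Adj (irSetVertex (.inl true)) (irSetVertex (.inr (.inr (i, t)))) :=
  IRGraph.adj_of_exchange (by simp [irSetVertex, irSet])
    (adj_mid_b t i) (swap_preimage_uLeafSet_eq_exchange i t)

lemma adj_irSetVertex_iff (p q : IRIndex n) :
    (IRGraph (Gn n)).Adj (irSetVertex p) (irSetVertex q) ↔
      (doubleStarOn (Fin n × Bool) (Fin n × Bool)).Adj p q := by
  rcases p with (_ | _) | (⟨i, s⟩ | ⟨i, s⟩) <;>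
    rcases q with (_ | _) | (⟨j, r⟩ | ⟨j, r⟩)
  · exact iff_of_false (SimpleGraph.irrefl _) (SimpleGraph.irrefl _)
  · exact iff_of_true adj_irSetVertex_centres (by simp [doubleStarOn])
  · exact iff_of_true (adj_irSetVertex_left_leaf j r) (by simp [doubleStarOn, -Prod.exists])
  · refine iff_of_false ?_ (by simp [doubleStarOn])
    exact IRGraph.not_adj_of_mem_sdiff (w := u) (w' := b j) (by simp [irSet]) (by simp [irSet])
      (not_adj_u_b j)
  · exact iff_of_true adj_irSetVertex_centres.symm (by simp [doubleStarOn])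
  · exact iff_of_false (SimpleGraph.irrefl _) (SimpleGraph.irrefl _)
  · refine iff_of_false ?_ (by simp [doubleStarOn])
    exact IRGraph.not_adj_of_mem_sdiff (w := v) (w' := a j) (by simp [irSet]) (by simp [irSet])
      (not_adj_v_a j)
  · exact iff_of_true (adj_irSetVertex_right_leaf j r) (by simp [doubleStarOn, -Prod.exists])
  · exact iff_of_true (adj_irSetVertex_left_leaf i s).symm (by simp [doubleStarOn, -Prod.exists])
  · refine iff_of_false ?_ (by simp [doubleStarOn])
    exact IRGraph.not_adj_of_mem_sdiff (w := a i) (w' := v) (by simp [irSet]) (by simp [irSet])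
      (mt Adj.symm (not_adj_v_a i))
  · refine iff_of_false ?_ (by simp [doubleStarOn])
    by_cases hij : i = j
    · subst hij
      by_cases hsr : s = r
      · subst hsr
        exact SimpleGraph.irrefl _
      · exact IRGraph.not_adj_of_mem_sdiff (w := mid r i) (w' := mid s i)
          (by simp [irSet, Ne.symm hsr]) (by simp [irSet, hsr]) (not_adj_mid_mid r s i i)
    · exact IRGraph.not_adj_of_mem_sdiff (w := a i) (w' := a j) (by simp [irSet, hij])
        (by simp [irSet, Ne.symm hij]) (not_adj_a_a i j)
  · refine iff_of_false ?_ (by simp [doubleStarOn])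
    exact IRGraph.not_adj_of_mem_sdiff (w := u) (w' := b j) (by simp [irSet]) (by simp [irSet])
      (not_adj_u_b j)
  · refine iff_of_false ?_ (by simp [doubleStarOn])
    exact IRGraph.not_adj_of_mem_sdiff (w := b i) (w' := u) (by simp [irSet]) (by simp [irSet])
      (mt Adj.symm (not_adj_u_b i))
  · exact iff_of_true (adj_irSetVertex_right_leaf i s).symm (by simp [doubleStarOn, -Prod.exists])
  · refine iff_of_false ?_ (by simp [doubleStarOn])
    exact IRGraph.not_adj_of_mem_sdiff (w := b i) (w' := u) (by simp [irSet]) (by simp [irSet])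
      (mt Adj.symm (not_adj_u_b i))
  · refine iff_of_false ?_ (by simp [doubleStarOn])
    by_cases hij : i = j
    · subst hij
      by_cases hsr : s = r
      · subst hsr
        exact SimpleGraph.irrefl _
      · exact IRGraph.not_adj_of_mem_sdiff (w := mid r i) (w' := mid s i)
          (by simp [irSet, Ne.symm hsr]) (by simp [irSet, hsr]) (not_adj_mid_mid r s i i)
    · exact IRGraph.not_adj_of_mem_sdiff (w := b i) (w' := b j) (by simp [irSet, hij])
        (by simp [irSet, Ne.symm hij]) (not_adj_b_b i j)

noncomputable def irSetIso : doubleStarOn (Fin n × Bool) (Fin n × Bool) ≃g IRGraph (Gn n) where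
  toEquiv := Equiv.ofBijective irSetVertex
    ⟨fun _ _ h => irSet_injective (congrArg Subtype.val h), fun D => by
      obtain ⟨p, hp⟩ := exists_irSet_eq D.2
      exact ⟨p, Subtype.ext hp⟩⟩
  map_rel_iff' := adj_irSetVertex_iff _ _

end Gn

theorem statement1_general (n : ℕ) :
    Nonempty (IRGraph (Gn n) ≃g doubleStar (2 * n) (2 * n)) := by
  have e : Fin n × Bool ≃ Fin (2 * n) := Fintype.equivFinOfCardEq (by simp [mul_comm])
  rw [doubleStar_eq_doubleStarOn]
  exact ⟨Gn.irSetIso.symm.trans (doubleStarOn.congr e e)⟩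

/-- For every `n ≥ 1`, the `IR`-graph of `Gₙ` is isomorphic to the double star
`S(2n, 2n)`. -/
theorem statement1 (n : ℕ) (hn : 1 ≤ n) :
    Nonempty (IRGraph (Gn n) ≃g doubleStar (2 * n) (2 * n)) :=
  statement1_general n
end

section
/- For every integer n ≥ 1, the upper irredundance number of G_n equals 2n + 1, i.e., IR(G_n) = 2n + 1. -/
open SimpleGraph

/-!
Every `Sᵢ` meets an irredundant set `D` in at most two vertices: `cᵢ` and `dᵢ` both have
neighbourhood `{aᵢ, bᵢ}`, so if `aᵢ, bᵢ ∈ D` neither of them can lie in `D`, and if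
`cᵢ, dᵢ ∈ D` then `cᵢ` is redundant as soon as `aᵢ` or `bᵢ` lies in `D`. Trivially `{u, v}`
also meets `D` in at most two vertices. If `u, v ∈ D`, the private neighbour of `u` is some
`aᵢ`, and then `aᵢ, cᵢ, dᵢ ∉ D`. Either way one of the `n + 1` blocks `{u, v}, S₁, …, Sₙ`
contributes at most one vertex, so `|D| ≤ 2n + 1`. Conversely `{u} ∪ C ∪ D` is independent,
hence irredundant, and has `2n + 1` vertices.
-/

open Finset

section Irredundance

variable {V : Type*} {G : SimpleGraph V} {D : Set V}

theorem SimpleGraph.IsIndepSet.irredundant (hD : G.IsIndepSet D) : Irredundant G D := by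
  refine fun x hx => ⟨x, Or.inl rfl, fun y hy hyx hdom => ?_⟩
  rcases hdom with rfl | hadj
  · exact hyx rfl
  · exact hD hy hx hyx hadj

theorem Irredundant.not_forall_dominated (hD : Irredundant G D) {x : V} (hx : x ∈ D) :
    ¬∀ w, (w = x ∨ G.Adj x w) → ∃ y ∈ D, y ≠ x ∧ (w = y ∨ G.Adj y w) := by
  intro hdom
  obtain ⟨w, hxw, hpriv⟩ := hD x hx
  obtain ⟨y, hy, hyx, hyw⟩ := hdom w hxw
  exact hpriv y hy hyx hyw

end Irredundance

namespace Finset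

theorem card_lt_mul_card_of_forall_card_fiber_le {α β : Type*} [Fintype β]
    [DecidableEq β] {s : Finset α} {f : α → β} {m : ℕ}
    (hle : ∀ k, #{x ∈ s | f x = k} ≤ m) (hlt : ∃ k, #{x ∈ s | f x = k} < m) :
    #s < m * Fintype.card β := by
  rw [card_eq_sum_card_fiberwise fun x _ => mem_univ (f x), ← card_univ, mul_comm,
    ← smul_eq_mul, ← sum_const]
  obtain ⟨k, hk⟩ := hlt
  exact sum_lt_sum (fun k _ => hle k) ⟨k, mem_univ k, hk⟩

end Finset

def GVert.block {n : ℕ} : GVert n → Option (Fin n)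
  | .u | .v => none
  | .a i | .b i | .c i | .d i => some i

namespace Gn

section PrivateNeighbours

variable {n : ℕ} {i : Fin n} {x w : GVert n}

theorem adj_u_iff : (Gn n).Adj .u w ↔ w = .v ∨ ∃ j, w = .a j := by
  cases w <;> simp [Gn, fromRel_adj]

theorem adj_iff_of_twin (hx : x = .c i ∨ x = .d i) : (Gn n).Adj x w ↔ w = .a i ∨ w = .b i := by
  rcases hx with rfl | rfl <;> cases w <;> simp [Gn, fromRel_adj] <;> aesop

theorem adj_a_twin (hx : x = .c i ∨ x = .d i) : (Gn n).Adj (.a i) x :=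
  ((adj_iff_of_twin hx).2 (Or.inl rfl)).symm

variable {D : Set (GVert n)}

theorem notMem_twin_of_mem_a_of_mem_b (hD : Irredundant (Gn n) D) (ha : .a i ∈ D)
    (hb : .b i ∈ D) (hx : x = .c i ∨ x = .d i) : x ∉ D := by
  refine fun hxD => hD.not_forall_dominated hxD fun w hw => ?_
  have hxa : GVert.a i ≠ x := by rcases hx with rfl | rfl <;> simp
  have hxb : GVert.b i ≠ x := by rcases hx with rfl | rfl <;> simp
  rcases hw with rfl | hw
  · exact ⟨_, ha, hxa, Or.inr (adj_a_twin hx)⟩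
  · rcases (adj_iff_of_twin hx).1 hw with rfl | rfl
    · exact ⟨_, ha, hxa, Or.inl rfl⟩
    · exact ⟨_, hb, hxb, Or.inl rfl⟩

theorem notMem_of_mem_c_of_mem_d (hD : Irredundant (Gn n) D) (hc : .c i ∈ D)
    (hd : .d i ∈ D) (hx : x = .a i ∨ x = .b i) : x ∉ D := by
  refine fun hxD => hD.not_forall_dominated hc fun w hw => ?_
  have hxc : x ≠ .c i := by rcases hx with rfl | rfl <;> simp
  rcases hw with rfl | hw
  · exact ⟨x, hxD, hxc, Or.inr ((adj_iff_of_twin (Or.inl rfl)).2 hx).symm⟩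
  · exact ⟨.d i, hd, by simp, Or.inr ((adj_iff_of_twin (Or.inr rfl)).2
      ((adj_iff_of_twin (Or.inl rfl)).1 hw))⟩

theorem exists_notMem_of_mem_u_of_mem_v (hD : Irredundant (Gn n) D) (hu : .u ∈ D)
    (hv : .v ∈ D) : ∃ i, .a i ∉ D ∧ .c i ∉ D ∧ .d i ∉ D := by
  refine by_contra fun h => hD.not_forall_dominated hu fun w hw => ?_
  rcases hw with rfl | hw
  · exact ⟨.v, hv, by simp, Or.inr (adj_u_iff.2 (Or.inl rfl)).symm⟩
  rcases adj_u_iff.1 hw with rfl | ⟨j, rfl⟩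
  · exact ⟨.v, hv, by simp, Or.inl rfl⟩
  by_cases ha : .a j ∈ D
  · exact ⟨_, ha, by simp, Or.inl rfl⟩
  by_cases hc : .c j ∈ D
  · exact ⟨_, hc, by simp, Or.inr (adj_a_twin (Or.inl rfl)).symm⟩
  by_cases hd : .d j ∈ D
  · exact ⟨_, hd, by simp, Or.inr (adj_a_twin (Or.inr rfl)).symm⟩
  exact absurd ⟨j, ha, hc, hd⟩ h

end PrivateNeighbours

section Counting

variable {n : ℕ} (s : Finset (GVert n))

theorem card_block_none :
    #{x ∈ s | x.block = none} = (if .u ∈ s then 1 else 0) + (if .v ∈ s then 1 else 0) := by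
  have : {x ∈ s | x.block = none} = ({.u, .v} : Finset (GVert n)).filter (· ∈ s) := by
    ext x; rw [mem_filter, mem_filter]; cases x <;> simp [GVert.block, and_comm]
  rw [this, card_filter, sum_pair (by simp)]

theorem card_block_some (i : Fin n) :
    #{x ∈ s | x.block = some i} = (if .a i ∈ s then 1 else 0) + (if .b i ∈ s then 1 else 0) +
      (if .c i ∈ s then 1 else 0) + (if .d i ∈ s then 1 else 0) := by
  have : {x ∈ s | x.block = some i} =
      ({.a i, .b i, .c i, .d i} : Finset (GVert n)).filter (· ∈ s) := by
    ext x; rw [mem_filter, mem_filter]; cases x <;> simp [GVert.block, and_comm, eq_comm]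
  rw [this, card_filter, sum_insert (by simp), sum_insert (by simp), sum_pair (by simp)]
  ring

variable {s}

theorem card_block_le_two (hD : Irredundant (Gn n) s) (k : Option (Fin n)) :
    #{x ∈ s | x.block = k} ≤ 2 := by
  cases k with
  | none => rw [card_block_none]; split_ifs <;> omega
  | some i =>
    have hcd (ha : .a i ∈ s) (hb : .b i ∈ s) (x) (hx : x = .c i ∨ x = .d i) : x ∉ s :=
      notMem_twin_of_mem_a_of_mem_b hD ha hb hx
    have hab (hc : .c i ∈ s) (hd : .d i ∈ s) (x) (hx : x = .a i ∨ x = .b i) : x ∉ s :=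
      notMem_of_mem_c_of_mem_d hD hc hd hx
    rw [card_block_some]
    split_ifs <;> simp_all

theorem exists_card_block_lt_two (hD : Irredundant (Gn n) s) :
    ∃ k, #{x ∈ s | x.block = k} < 2 := by
  by_cases huv : .u ∈ s ∧ .v ∈ s
  · obtain ⟨i, ha, hc, hd⟩ := exists_notMem_of_mem_u_of_mem_v hD huv.1 huv.2
    refine ⟨some i, ?_⟩
    rw [card_block_some]
    split_ifs <;> simp_all
  · refine ⟨none, ?_⟩
    rw [card_block_none]
    split_ifs <;> simp_all

theorem card_lt_of_irredundant (hD : Irredundant (Gn n) s) : #s < 2 * (n + 1) := by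
  simpa using card_lt_mul_card_of_forall_card_fiber_le (card_block_le_two hD)
    (exists_card_block_lt_two hD)

end Counting

variable {n : ℕ}

def uCD (n : ℕ) : Set (GVert n) := insert .u (Set.range .c ∪ Set.range .d)

theorem isIndepSet_uCD : (Gn n).IsIndepSet (uCD n) := by
  rintro x (rfl | ⟨i, rfl⟩ | ⟨i, rfl⟩) y (rfl | ⟨j, rfl⟩ | ⟨j, rfl⟩) - <;> simp [Gn, fromRel_adj]

theorem ncard_uCD : (uCD n).ncard = 2 * n + 1 := by
  have hdisj : Disjoint (Set.range (GVert.c (n := n))) (Set.range .d) := by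
    rw [Set.disjoint_range_iff]; simp
  rw [uCD, Set.ncard_insert_of_notMem (by simp), Set.ncard_union_eq hdisj,
    Set.ncard_range_of_injective (fun _ _ h => by simpa using h),
    Set.ncard_range_of_injective (fun _ _ h => by simpa using h), Nat.card_eq_fintype_card,
    Fintype.card_fin]
  ring

end Gn

theorem statement2_general (n : ℕ) : IRnum (Gn n) = 2 * n + 1 := by
  refine IsGreatest.csSup_eq ⟨⟨Gn.uCD n, Gn.isIndepSet_uCD.irredundant, Gn.ncard_uCD⟩, ?_⟩
  rintro _ ⟨D, hD, rfl⟩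
  obtain ⟨s, rfl⟩ := D.toFinite.exists_finset_coe
  rw [Set.ncard_coe_finset]
  have := Gn.card_lt_of_irredundant hD
  omega

/-- For every `n ≥ 1`, `IR(Gₙ) = 2n + 1`. -/
theorem statement2 (n : ℕ) (hn : 1 ≤ n) : IRnum (Gn n) = 2 * n + 1 :=
  statement2_general n
end

section
/- For every integer n ≥ 1 and every irredundant set X of the graph G_n, one has |X ∩ S_i| ≤ 2 for each i = 1, ..., n. -/
/-!
In `Gₙ` the vertices `cᵢ` and `dᵢ` are non-adjacent twins whose only neighbours are `aᵢ` and `bᵢ`.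
Three vertices of `Sᵢ` in `X` include one of the twins, and the other two then dominate its whole
closed neighbourhood, so it has no `X`-private neighbour.
-/

open SimpleGraph

lemma Set.ncard_le_two_of_subset_insert {α : Type*} {s t : Set α} {p : α}
    (hst : s ⊆ insert p t) (ht : t.Subsingleton) : s.ncard ≤ 2 := by
  have : Finite t := ht.finite
  calc s.ncard ≤ (insert p t).ncard := Set.ncard_le_ncard hst (ht.finite.insert p)
    _ ≤ t.ncard + 1 := Set.ncard_insert_le p t
    _ ≤ 2 := by have := Set.ncard_le_one_iff_subsingleton.2 ht; omega

/-- Any two of `x, y, z'` dominate `N[z] = {z, x, y}` without the help of `z`. -/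
theorem Irredundant.subsingleton_inter_of_neighborSet_eq {V : Type*} {G : SimpleGraph V}
    {D : Set V} (hD : Irredundant G D) {x y z z' : V} (hz : z ∈ D)
    (hNz : G.neighborSet z = {x, y}) (hNz' : {x, y} ⊆ G.neighborSet z') (hzz' : z ≠ z') :
    (D ∩ {x, y, z'}).Subsingleton := by
  have hzx : G.Adj z x := by simp [← mem_neighborSet, hNz]
  have hzy : G.Adj z y := by simp [← mem_neighborSet, hNz]
  have hz'x : G.Adj z' x := hNz' (by simp)
  have hz'y : G.Adj z' y := hNz' (by simp)
  obtain ⟨w, hwz, hw_private⟩ := hD z hz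
  have hw : w = z ∨ w = x ∨ w = y := by
    rcases hwz with rfl | hadj
    · exact Or.inl rfl
    · exact Or.inr (by simpa [← mem_neighborSet, hNz] using hadj)
  have h_subset : ∃ u, D ∩ {x, y, z'} ⊆ {u} := by
    rcases hw with hw | hw | hw <;> rw [hw] at hw_private
    · have hx : x ∉ D := fun h => hw_private x h hzx.ne' (Or.inr hzx.symm)
      have hy : y ∉ D := fun h => hw_private y h hzy.ne' (Or.inr hzy.symm)
      exact ⟨z', fun u ⟨huD, hu⟩ => by rcases hu with rfl | rfl | rfl <;> simp_all⟩
    · have hx : x ∉ D := fun h => hw_private x h hzx.ne' (Or.inl rfl)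
      have hz' : z' ∉ D := fun h => hw_private z' h hzz'.symm (Or.inr hz'x)
      exact ⟨y, fun u ⟨huD, hu⟩ => by rcases hu with rfl | rfl | rfl <;> simp_all⟩
    · have hy : y ∉ D := fun h => hw_private y h hzy.ne' (Or.inl rfl)
      have hz' : z' ∉ D := fun h => hw_private z' h hzz'.symm (Or.inr hz'y)
      exact ⟨x, fun u ⟨huD, hu⟩ => by rcases hu with rfl | rfl | rfl <;> simp_all⟩
  obtain ⟨u, hu⟩ := h_subset
  exact Set.subsingleton_singleton.anti hu

namespace Gn

variable {n : ℕ} (i : Fin n)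

lemma neighborSet_c : (Gn n).neighborSet (.c i) = {.a i, .b i} := by
  ext y; cases y <;> simp [Gn, eq_comm]

lemma neighborSet_d : (Gn n).neighborSet (.d i) = {.a i, .b i} := by
  ext y; cases y <;> simp [Gn, eq_comm]

end Gn

theorem statement3_general (n : ℕ) (X : Set (GVert n))
    (hX : Irredundant (Gn n) X) (i : Fin n) :
    (X ∩ Sset n i).ncard ≤ 2 := by
  by_cases hc : GVert.c i ∈ X
  · refine Set.ncard_le_two_of_subset_insert (p := .c i) ?_
      (hX.subsingleton_inter_of_neighborSet_eq hc (Gn.neighborSet_c i)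
        (Gn.neighborSet_d i).superset (by simp))
    rintro w ⟨hwX, rfl | rfl | rfl | rfl⟩ <;> simp [hwX]
  by_cases hd : GVert.d i ∈ X
  · refine Set.ncard_le_two_of_subset_insert (p := .d i) ?_
      (hX.subsingleton_inter_of_neighborSet_eq hd (Gn.neighborSet_d i)
        (Gn.neighborSet_c i).superset (by simp))
    rintro w ⟨hwX, rfl | rfl | rfl | rfl⟩ <;> simp [hwX]
  refine Set.ncard_le_two_of_subset_insert (p := .a i) (t := {.b i}) ?_ Set.subsingleton_singleton
  rintro w ⟨hwX, rfl | rfl | rfl | rfl⟩ <;> simp_all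

/-- For every `n ≥ 1` and every irredundant set `X` of `Gₙ`,
`|X ∩ Sᵢ| ≤ 2` for each `i`. -/
theorem statement3 (n : ℕ) (hn : 1 ≤ n) (X : Set (GVert n))
    (hX : Irredundant (Gn n) X) (i : Fin n) :
    (X ∩ Sset n i).ncard ≤ 2 :=
  statement3_general n X hX i
end

section
/- For every integer n ≥ 1 and every irredundant set X of the graph G_n with {u,v} ⊆ X, one has |X| ≤ 2n. -/
open SimpleGraph

/-!
The private neighbour of `u` must be some `aᵢ` and that of `v` some `b_j`, since `u` and `v`
dominate each other. Privacy keeps every other vertex of `N[aᵢ]` and `N[b_j]` out of `X`, so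
`X ⊆ {u, v, a_j, b_i} ∪ {c_k, d_k : k ≠ i, j}`, with `a_j, b_i ∉ X` when `i = j`; in either case
`|X| ≤ 2n`.
-/

theorem IsPrivateNbr.eq_of_mem_of_dominates {V : Type*} {G : SimpleGraph V} {D : Set V}
    {x w y : V} (h : IsPrivateNbr G D x w) (hy : y ∈ D) (hyw : w = y ∨ G.Adj y w) : y = x :=
  by_contra fun hyx => h.2 y hy hyx hyw

namespace GVert

variable {n : ℕ} {X : Set (GVert n)}

theorem exists_isPrivateNbr_u (hX : Irredundant (Gn n) X) (hu : u ∈ X) (hv : v ∈ X) :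
    ∃ i, IsPrivateNbr (Gn n) X u (a i) := by
  obtain ⟨w, hw⟩ := hX u hu
  have hvw : ¬(w = v ∨ (Gn n).Adj v w) := hw.2 v hv (by simp)
  cases w with
  | u => exact absurd (Or.inr (by simp [Gn])) hvw
  | v => exact absurd (Or.inl rfl) hvw
  | a i => exact ⟨i, hw⟩
  | b i | c i | d i => exact absurd hw.1 (by simp [Gn])

theorem exists_isPrivateNbr_v (hX : Irredundant (Gn n) X) (hu : u ∈ X) (hv : v ∈ X) :
    ∃ j, IsPrivateNbr (Gn n) X v (b j) := by
  obtain ⟨w, hw⟩ := hX v hv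
  have huw : ¬(w = u ∨ (Gn n).Adj u w) := hw.2 u hu (by simp)
  cases w with
  | u => exact absurd (Or.inl rfl) huw
  | v => exact absurd (Or.inr (by simp [Gn])) huw
  | b j => exact ⟨j, hw⟩
  | a j | c j | d j => exact absurd hw.1 (by simp [Gn])

theorem mem_cases_of_isPrivateNbr {i j : Fin n} (hi : IsPrivateNbr (Gn n) X u (a i))
    (hj : IsPrivateNbr (Gn n) X v (b j)) {x : GVert n} (hx : x ∈ X) :
    x = u ∨ x = v ∨ (x = a j ∧ i ≠ j) ∨ (x = b i ∧ i ≠ j) ∨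
      ∃ k, k ≠ i ∧ k ≠ j ∧ (x = c k ∨ x = d k) := by
  have hxi := hi.eq_of_mem_of_dominates hx
  have hxj := hj.eq_of_mem_of_dominates hx
  cases x with
  | u | v => simp
  | a _ | b _ | c _ | d _ => grind [Gn, fromRel_adj]

/-- Since `X` contains no `cᵢ, dᵢ, c_j, d_j`, the slots of index `j` are free for `u, v` and those of
index `i` for `a_j, b_i` (which lie in `X` only if `i ≠ j`). -/
def slot (i j : Fin n) : GVert n → Fin n × Bool
  | u => (j, false)
  | v => (j, true)
  | a _ => (i, false)
  | b _ => (i, true)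
  | c k => (k, false)
  | d k => (k, true)

theorem injOn_slot {i j : Fin n} (hi : IsPrivateNbr (Gn n) X u (a i))
    (hj : IsPrivateNbr (Gn n) X v (b j)) : Set.InjOn (slot i j) X := by
  intro x hx y hy hxy
  rcases mem_cases_of_isPrivateNbr hi hj hx with
    rfl | rfl | ⟨rfl, _⟩ | ⟨rfl, _⟩ | ⟨k, _, _, rfl | rfl⟩ <;>
  rcases mem_cases_of_isPrivateNbr hi hj hy with
    rfl | rfl | ⟨rfl, _⟩ | ⟨rfl, _⟩ | ⟨l, _, _, rfl | rfl⟩ <;>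
  simp_all [slot]

end GVert

theorem statement4_general (n : ℕ) (X : Set (GVert n))
    (hX : Irredundant (Gn n) X) (hu : GVert.u ∈ X) (hv : GVert.v ∈ X) :
    X.ncard ≤ 2 * n := by
  obtain ⟨i, hi⟩ := GVert.exists_isPrivateNbr_u hX hu hv
  obtain ⟨j, hj⟩ := GVert.exists_isPrivateNbr_v hX hu hv
  calc X.ncard ≤ (Set.univ : Set (Fin n × Bool)).ncard :=
        Set.ncard_le_ncard_of_injOn _ (fun _ _ => Set.mem_univ _) (GVert.injOn_slot hi hj)
    _ = 2 * n := by simp [Set.ncard_univ, mul_comm]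

/-- For every `n ≥ 1` and every irredundant set `X` of `Gₙ` with `{u, v} ⊆ X`,
`|X| ≤ 2n`. -/
theorem statement4 (n : ℕ) (hn : 1 ≤ n) (X : Set (GVert n))
    (hX : Irredundant (Gn n) X) (hu : GVert.u ∈ X) (hv : GVert.v ∈ X) :
    X.ncard ≤ 2 * n :=
  statement4_general n X hX hu hv
end

section
/- If X is an IR(G)-set of a finite simple graph G, then any flip-set of X is also an IR(G)-set. Moreover, if X' is the flip-set of X using Y', and y' ∈ Y' belongs to EPN(y, X), then y ∈ EPN(y', X'). -/
open SimpleGraph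

/-!
Each `y ∈ X^EPN` is the only vertex of `X` dominating its chosen private neighbour `y'`, and
`y'` lies outside `X`. Hence in the flip-set `X'` the only vertex dominating `y` is `y'`
(the vertices of `X^iso` are isolated in `G[X]`, and any other `z'` is private to `z ≠ y`),
so `y` is an external `X'`-private neighbour of `y'`; each vertex of `X^iso` is its own
`X'`-private neighbour by the same reasoning. The map `y ↦ y'` is injective with image
disjoint from `X`, so `|X'| = |X| = IR(G)`.
-/

open Set

theorem Set.ncard_diff_union_image {α : Type*} {A B : Set α} {f : α → α} (hB : B ⊆ A)
    (hf : InjOn f B) (hdisj : Disjoint A (f '' B)) : ((A \ B) ∪ f '' B).ncard = A.ncard := by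
  have hdisj' : Disjoint (A \ B) (f '' B) := hdisj.mono_left sdiff_subset
  rw [ncard_def, ncard_def, encard_union_eq hdisj', hf.encard_image,
    encard_sdiff_add_encard_of_subset hB]

section PrivateNeighbours

variable {V : Type*} {G : SimpleGraph V} {D : Set V} {u v w : V}

theorem adj_of_mem_EPN (hw : w ∈ EPN G v D) (hv : v ∈ D) : G.Adj v w :=
  hw.1.1.resolve_left fun h => hw.2 (h ▸ hv)

theorem eq_of_mem_PN_of_mem_PN (hv : w ∈ PN G v D) (hu : w ∈ PN G u D) (huD : u ∈ D) :
    u = v := by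
  by_contra h
  exact hv.2 u huD h hu.1

theorem injOn_of_mem_PN {B : Set V} {f : V → V} (hB : B ⊆ D) (hf : ∀ y ∈ B, f y ∈ PN G y D) :
    InjOn f B := fun y hy z hz hyz =>
  (eq_of_mem_PN_of_mem_PN (hf y hy) (hyz ▸ hf z hz) (hB hz)).symm

end PrivateNeighbours

/-- The flip-set `(X − B) ∪ f(B)`, where `B` plays the role of `X^EPN` and `f` picks `y'`. -/
def flipSet {V : Type*} (X B : Set V) (f : V → V) : Set V := (X \ B) ∪ f '' B

section FlipSet

variable {V : Type*} {G : SimpleGraph V} {X B : Set V} {f : V → V}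

theorem eq_of_mem_flipSet_of_dominates (hiso : ∀ v ∈ X \ B, ∀ z ∈ X, ¬ G.Adj v z)
    (hf : ∀ y ∈ B, f y ∈ EPN G y X) {x u : V} (hx : x ∈ X) (hu : u ∈ flipSet X B f)
    (hdom : x = u ∨ G.Adj u x) : (u = x ∧ x ∉ B) ∨ (x ∈ B ∧ u = f x) := by
  rcases hu with ⟨huX, huB⟩ | ⟨z, hz, rfl⟩
  · rcases hdom with rfl | hadj
    · exact Or.inl ⟨rfl, huB⟩
    · exact absurd hadj (hiso u ⟨huX, huB⟩ x hx)
  · have hxz : x = z := by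
      by_contra hxz
      exact (hf z hz).1.2 x hx hxz (hdom.imp Eq.symm G.adj_symm)
    subst hxz
    exact Or.inr ⟨hz, rfl⟩

theorem mem_EPN_flipSet (hB : B ⊆ X) (hiso : ∀ v ∈ X \ B, ∀ z ∈ X, ¬ G.Adj v z)
    (hf : ∀ y ∈ B, f y ∈ EPN G y X) {y : V} (hy : y ∈ B) : y ∈ EPN G (f y) (flipSet X B f) := by
  refine ⟨⟨Or.inr (adj_of_mem_EPN (hf y hy) (hB hy)).symm, fun u hu huy hdom => ?_⟩, ?_⟩
  · rcases eq_of_mem_flipSet_of_dominates hiso hf (hB hy) hu hdom with ⟨-, hyB⟩ | ⟨-, rfl⟩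
    · exact hyB hy
    · exact huy rfl
  · rintro (⟨-, hyB⟩ | ⟨z, hz, hzy⟩)
    · exact hyB hy
    · exact (hf z hz).2 (hzy ▸ hB hy)

theorem mem_PN_flipSet_self (hiso : ∀ v ∈ X \ B, ∀ z ∈ X, ¬ G.Adj v z)
    (hf : ∀ y ∈ B, f y ∈ EPN G y X) {v : V} (hv : v ∈ X \ B) : v ∈ PN G v (flipSet X B f) := by
  refine ⟨Or.inl rfl, fun u hu huv hdom => ?_⟩
  rcases eq_of_mem_flipSet_of_dominates hiso hf hv.1 hu hdom with ⟨rfl, -⟩ | ⟨hvB, -⟩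
  · exact huv rfl
  · exact hv.2 hvB

theorem irredundant_flipSet (hB : B ⊆ X) (hiso : ∀ v ∈ X \ B, ∀ z ∈ X, ¬ G.Adj v z)
    (hf : ∀ y ∈ B, f y ∈ EPN G y X) : Irredundant G (flipSet X B f) := by
  rintro v (hv | ⟨y, hy, rfl⟩)
  · exact ⟨v, mem_PN_flipSet_self hiso hf hv⟩
  · exact ⟨y, (mem_EPN_flipSet hB hiso hf hy).1⟩

theorem isIRSet_flipSet (hB : B ⊆ X) (hiso : ∀ v ∈ X \ B, ∀ z ∈ X, ¬ G.Adj v z)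
    (hf : ∀ y ∈ B, f y ∈ EPN G y X) (hX : IsIRSet G X) : IsIRSet G (flipSet X B f) := by
  have hinj : InjOn f B := injOn_of_mem_PN hB fun y hy => (hf y hy).1
  have hdisj : Disjoint X (f '' B) := by
    rw [disjoint_right]
    rintro _ ⟨y, hy, rfl⟩
    exact (hf y hy).2
  refine ⟨irredundant_flipSet hB hiso hf, ?_⟩
  rw [flipSet, ncard_diff_union_image hB hinj hdisj]
  exact hX.2

end FlipSet

theorem statement8_general {V : Type*} (G : SimpleGraph V)
    (X Xepn Xiso : Set V) (hX : IsIRSet G X)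
    (hunion : Xepn ∪ Xiso = X)
    (hiso : ∀ y ∈ Xiso, ∀ z ∈ X, ¬ G.Adj y z)
    (f : V → V) (hf : ∀ y ∈ Xepn, f y ∈ EPN G y X) :
    IsIRSet G ((X \ Xepn) ∪ (f '' Xepn)) ∧
      ∀ y ∈ Xepn, y ∈ EPN G (f y) ((X \ Xepn) ∪ (f '' Xepn)) := by
  have hB : Xepn ⊆ X := hunion ▸ subset_union_left
  have hiso_diff : ∀ v ∈ X \ Xepn, ∀ z ∈ X, ¬ G.Adj v z := fun v hv =>
    hiso v ((hunion ▸ hv.1).resolve_left hv.2)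
  exact ⟨isIRSet_flipSet hB hiso_diff hf hX, fun y hy => mem_EPN_flipSet hB hiso_diff hf hy⟩

/-- If `X` is an `IR(G)`-set, then so is any flip-set of `X`; moreover if
`y' ∈ Y'` belongs to `EPN(y, X)`, then `y ∈ EPN(y', X')` where `X'` is the
flip-set of `X` using `Y'`. -/
theorem statement8 {V : Type*} [Fintype V] (G : SimpleGraph V)
    (X Xepn Xiso : Set V) (hX : IsIRSet G X)
    (hunion : Xepn ∪ Xiso = X) (hdisj : Disjoint Xepn Xiso)
    (hiso : ∀ y ∈ Xiso, ∀ z ∈ X, ¬ G.Adj y z)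
    (f : V → V) (hf : ∀ y ∈ Xepn, f y ∈ EPN G y X) :
    IsIRSet G ((X \ Xepn) ∪ (f '' Xepn)) ∧
      ∀ y ∈ Xepn, y ∈ EPN G (f y) ((X \ Xepn) ∪ (f '' Xepn)) :=
  statement8_general G X Xepn Xiso hX hunion hiso f hf
end

section
/- Let G be a finite simple graph whose IR-graph H is connected, and let X be an IR(G)-set that contains k ≥ 3 vertices each of which has positive degree in the induced subgraph G[X] or has an X-external private neighbour. Then the diameter of H is at least k. -/
open SimpleGraph

/-!
Send every vertex of `X` that has an external private neighbour to one such neighbour, all at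
once. The result `Y` is again an `IR(G)`-set: the moved vertices become private neighbours of their
images, and the remaining vertices of `X` were their own private neighbours. A vertex with a
neighbour inside `X` cannot be its own private neighbour, so every vertex of `S` is moved and
`|X \ Y| ≥ k`. An edge of the `IR`-graph changes one vertex, hence `dist(X, Y) ≥ |X \ Y|`.
-/

section PrivateNeighbours

variable {V : Type*} {G : SimpleGraph V} {X : Set V}

def withEPN (G : SimpleGraph V) (X : Set V) : Set V := {x | x ∈ X ∧ (EPN G x X).Nonempty}

lemma withEPN_subset : withEPN G X ⊆ X := fun _ hx => hx.1

lemma Irredundant.isPrivateNbr_self_of_notMem_withEPN (hX : Irredundant G X) {x : V}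
    (hx : x ∈ X) (hxE : x ∉ withEPN G X) : IsPrivateNbr G X x x := by
  obtain ⟨w, hw⟩ := hX x hx
  obtain rfl : w = x := by
    by_contra hne
    have hwX : w ∉ X := fun hwX => hw.2 w hwX hne (Or.inl rfl)
    exact hxE ⟨hx, w, hw, hwX⟩
  exact hw

lemma Irredundant.mem_withEPN_of_adj (hX : Irredundant G X) {s t : V} (hs : s ∈ X)
    (ht : t ∈ X) (hst : G.Adj s t) : s ∈ withEPN G X := by
  by_contra hsE
  exact (hX.isPrivateNbr_self_of_notMem_withEPN hs hsE).2 t ht hst.ne' (Or.inr hst.symm)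

lemma adj_of_mem_EPN_s11 {s w : V} (hs : s ∈ X) (hw : w ∈ EPN G s X) : G.Adj s w :=
  hw.1.1.resolve_left fun h => hw.2 (h ▸ hs)

section Swap

variable {f : V → V}

lemma injOn_withEPN_of_mem_EPN (hf : ∀ s ∈ withEPN G X, f s ∈ EPN G s X) :
    Set.InjOn f (withEPN G X) := by
  intro s hs t ht hst
  by_contra hne
  exact (hf t ht).1.2 s hs.1 hne (Or.inr (hst ▸ adj_of_mem_EPN_s11 hs.1 (hf s hs)))

lemma withEPN_subset_diff_swap (hf : ∀ s ∈ withEPN G X, f s ∈ EPN G s X) :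
    withEPN G X ⊆ X \ (X \ withEPN G X ∪ f '' withEPN G X) := by
  rintro s hs
  refine ⟨hs.1, ?_⟩
  rintro (⟨-, hsE⟩ | ⟨t, ht, rfl⟩)
  · exact hsE hs
  · exact (hf t ht).2 hs.1

lemma ncard_swap [Finite V] (hf : ∀ s ∈ withEPN G X, f s ∈ EPN G s X) :
    (X \ withEPN G X ∪ f '' withEPN G X).ncard = X.ncard := by
  have hdisj : Disjoint (X \ withEPN G X) (f '' withEPN G X) := by
    rw [Set.disjoint_left]
    rintro x ⟨hxX, -⟩ ⟨t, ht, rfl⟩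
    exact (hf t ht).2 hxX
  rw [Set.ncard_union_eq hdisj, (injOn_withEPN_of_mem_EPN hf).ncard_image,
    Set.ncard_sdiff_add_ncard_of_subset withEPN_subset]

lemma Irredundant.swap (hX : Irredundant G X) (hf : ∀ s ∈ withEPN G X, f s ∈ EPN G s X) :
    Irredundant G (X \ withEPN G X ∪ f '' withEPN G X) := by
  rintro y (⟨hyX, hyE⟩ | ⟨s, hs, rfl⟩)
  · have hy := hX.isPrivateNbr_self_of_notMem_withEPN hyX hyE
    refine ⟨y, Or.inl rfl, ?_⟩
    rintro u (⟨huX, -⟩ | ⟨t, ht, rfl⟩) hne hdom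
    · exact hy.2 u huX hne hdom
    · rcases hdom with h | h
      · exact (hf t ht).2 (h ▸ hyX)
      · exact (hf t ht).1.2 y hyX (fun h' => hyE (h' ▸ ht)) (Or.inr h.symm)
  · refine ⟨s, Or.inr (adj_of_mem_EPN_s11 hs.1 (hf s hs)).symm, ?_⟩
    rintro u (⟨huX, huE⟩ | ⟨t, ht, rfl⟩) hne hdom
    · rcases hdom with rfl | h
      · exact huE hs
      · have hus : u ≠ s := fun h' => huE (h' ▸ hs)
        exact (hX.isPrivateNbr_self_of_notMem_withEPN huX huE).2 s hs.1 hus.symm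
          (Or.inr h.symm)
    · have hts : t ≠ s := fun h' => hne (h' ▸ rfl)
      rcases hdom with h | h
      · exact (hf t ht).2 (h ▸ hs.1)
      · exact (hf t ht).1.2 s hs.1 hts.symm (Or.inr h.symm)

end Swap

lemma IsIRSet.exists_isIRSet_withEPN_subset_diff [Finite V] (hX : IsIRSet G X) :
    ∃ Y, IsIRSet G Y ∧ withEPN G X ⊆ X \ Y := by
  have hchoice : ∀ s, ∃ w, s ∈ withEPN G X → w ∈ EPN G s X := fun s => by
    by_cases hs : s ∈ withEPN G X
    · exact hs.2.imp fun w hw _ => hw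
    · exact ⟨s, fun h => absurd h hs⟩
  choose f hf using hchoice
  exact ⟨_, ⟨hX.1.swap hf, (ncard_swap hf).trans hX.2⟩, withEPN_subset_diff_swap hf⟩

end PrivateNeighbours

section IRGraphDist

variable {V : Type*} [Fintype V] {G : SimpleGraph V}

lemma IRGraph.ncard_diff_le_one_of_adj {D E : {D : Set V // IsIRSet G D}}
    (h : (IRGraph G).Adj D E) : (D.1 \ E.1).ncard ≤ 1 := by
  obtain ⟨a, b, -, -, -, -, hE⟩ := h
  have hsub : D.1 \ E.1 ⊆ {a} := by
    rintro x ⟨hxD, hxE⟩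
    by_contra hxa
    exact hxE (hE ▸ Or.inl ⟨hxD, hxa⟩)
  simpa using Set.ncard_le_ncard hsub

lemma IRGraph.ncard_diff_le_length {D E : {D : Set V // IsIRSet G D}}
    (p : (IRGraph G).Walk D E) : (D.1 \ E.1).ncard ≤ p.length := by
  induction p with
  | nil => simp
  | @cons D E F h p ih =>
    calc (D.1 \ F.1).ncard ≤ (D.1 \ E.1 ∪ E.1 \ F.1).ncard :=
          Set.ncard_le_ncard (sdiff_triangle D.1 E.1 F.1)
      _ ≤ (D.1 \ E.1).ncard + (E.1 \ F.1).ncard := Set.ncard_union_le _ _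
      _ ≤ (p.cons h).length := by
          have := IRGraph.ncard_diff_le_one_of_adj h
          rw [Walk.length_cons]
          omega

lemma IRGraph.ncard_diff_le_diam (hconn : (IRGraph G).Connected)
    (D E : {D : Set V // IsIRSet G D}) : (D.1 \ E.1).ncard ≤ (IRGraph G).diam := by
  have : Nonempty {D : Set V // IsIRSet G D} := ⟨D⟩
  obtain ⟨p, hp⟩ := (hconn D E).exists_walk_length_eq_dist
  calc (D.1 \ E.1).ncard ≤ p.length := IRGraph.ncard_diff_le_length p
    _ = (IRGraph G).dist D E := hp
    _ ≤ (IRGraph G).diam := dist_le_diam (connected_iff_ediam_ne_top.1 hconn)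

end IRGraphDist

theorem statement11_general {V : Type*} [Fintype V] (G : SimpleGraph V)
    (hconn : (IRGraph G).Connected) (X : Set V) (hX : IsIRSet G X)
    (k : ℕ) (S : Set V) (hSX : S ⊆ X) (hScard : S.ncard = k)
    (hS : ∀ s ∈ S, (∃ t ∈ X, G.Adj s t) ∨ (EPN G s X).Nonempty) :
    k ≤ (IRGraph G).diam := by
  have hSE : S ⊆ withEPN G X := fun s hs =>
    (hS s hs).elim (fun ⟨_, ht, hst⟩ => hX.1.mem_withEPN_of_adj (hSX hs) ht hst)
      fun h => ⟨hSX hs, h⟩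
  obtain ⟨Y, hY, hYE⟩ := hX.exists_isIRSet_withEPN_subset_diff
  calc k = S.ncard := hScard.symm
    _ ≤ (X \ Y).ncard := Set.ncard_le_ncard (hSE.trans hYE)
    _ ≤ (IRGraph G).diam := IRGraph.ncard_diff_le_diam hconn ⟨X, hX⟩ ⟨Y, hY⟩

/-- If the `IR`-graph of `G` is connected and `X` is an `IR(G)`-set containing
`k ≥ 3` vertices each of positive degree in `G[X]` or with an `X`-external
private neighbour, then the diameter of the `IR`-graph is at least `k`. -/
theorem statement11 {V : Type*} [Fintype V] (G : SimpleGraph V)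
    (hconn : (IRGraph G).Connected) (X : Set V) (hX : IsIRSet G X)
    (k : ℕ) (hk : 3 ≤ k) (S : Set V) (hSX : S ⊆ X) (hScard : S.ncard = k)
    (hS : ∀ s ∈ S, (∃ t ∈ X, G.Adj s t) ∨ (EPN G s X).Nonempty) :
    k ≤ (IRGraph G).diam :=
  statement11_general G hconn X hX k S hSX hScard hS
end
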